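/- arXiv:1702.07228 — 2 statements merged into one kernel-verified Lean document; each statement's English description precedes it below -/
import Mathlib

section
/- Let α, β ∈ ℝ with β > 0 and |α| < β, and choose K with |α| ≤ K ≤ 2β - |α|. For Z = (y,z,u,ξ,η) in the domain of A (so ξ = u(0) = z(0)), the real part of ⟨AZ, Z⟩ satisfies Re⟨AZ, Z⟩ ≤ (1/2)[(-2β + |α| + K)|z(0)|² + (|α| - K)|u(1)|²] ≤ 0. Hence if Re⟨AZ, Z⟩ = 0 then z(0) = 0 and u(1) = 0. -/
open ComplexConjugate

lemma Complex.re_ofReal_mul_mul_conj_le (a : ℝ) (z w : ℂ) :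
    ((a : ℂ) * z * conj w).re ≤ |a| / 2 * (‖z‖ ^ 2 + ‖w‖ ^ 2) := by
  have hCS : ((a : ℂ) * z * conj w).re ≤ |a| * (‖z‖ * ‖w‖) :=
    calc ((a : ℂ) * z * conj w).re ≤ ‖(a : ℂ) * z * conj w‖ := Complex.re_le_norm _
      _ = |a| * (‖z‖ * ‖w‖) := by simp [mul_assoc]
  have hAMGM : ‖z‖ * ‖w‖ ≤ (‖z‖ ^ 2 + ‖w‖ ^ 2) / 2 := by
    nlinarith [sq_nonneg (‖z‖ - ‖w‖)]
  calc _ ≤ |a| * (‖z‖ * ‖w‖) := hCS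
    _ ≤ |a| * ((‖z‖ ^ 2 + ‖w‖ ^ 2) / 2) := by gcongr
    _ = |a| / 2 * (‖z‖ ^ 2 + ‖w‖ ^ 2) := by ring

lemma eq_zero_and_eq_zero_of_nonneg_neg_mul_add_neg_mul {R : Type*} [Field R] [LinearOrder R]
    [IsStrictOrderedRing R] {a b x y : R} (ha : a < 0) (hb : b < 0) (hx : 0 ≤ x) (hy : 0 ≤ y)
    (h : 0 ≤ a * x + b * y) : x = 0 ∧ y = 0 := by
  have hax : a * x ≤ 0 := mul_nonpos_of_nonpos_of_nonneg ha.le hx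
  have hby : b * y ≤ 0 := mul_nonpos_of_nonpos_of_nonneg hb.le hy
  exact ⟨(mul_eq_zero.mp (by linarith : a * x = 0)).resolve_left ha.ne,
    (mul_eq_zero.mp (by linarith : b * y = 0)).resolve_left hb.ne⟩

theorem stmt12_general (α β K : ℝ)
    (hK1 : |α| ≤ K) (hK2 : K ≤ 2 * β - |α|)
    (z0 u1 : ℂ) (ξ : ℂ) (hξ : ξ = z0) (R : ℝ)
    (hR : R = ((α : ℂ) * ξ * (starRingEnd ℂ) u1).re
        - K / 2 * ‖u1‖ ^ 2 + K / 2 * ‖ξ‖ ^ 2 - β * ‖ξ‖ ^ 2) :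
    R ≤ 1 / 2 * ((-2 * β + |α| + K) * ‖z0‖ ^ 2 + (|α| - K) * ‖u1‖ ^ 2) ∧
      1 / 2 * ((-2 * β + |α| + K) * ‖z0‖ ^ 2 + (|α| - K) * ‖u1‖ ^ 2) ≤ 0 ∧
      (|α| < K → K < 2 * β - |α| → R = 0 → z0 = 0 ∧ u1 = 0) := by
  subst hξ hR
  have hbound := Complex.re_ofReal_mul_mul_conj_le α ξ u1
  have hz := sq_nonneg ‖ξ‖
  have hu := sq_nonneg ‖u1‖
  have hnonpos : 1 / 2 * ((-2 * β + |α| + K) * ‖ξ‖ ^ 2 + (|α| - K) * ‖u1‖ ^ 2) ≤ 0 := by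
    linarith [mul_nonpos_of_nonpos_of_nonneg (by linarith : -2 * β + |α| + K ≤ 0) hz,
      mul_nonpos_of_nonpos_of_nonneg (by linarith : |α| - K ≤ 0) hu]
  refine ⟨by linarith, hnonpos, fun hK1' hK2' hR0 => ?_⟩
  obtain ⟨hξ0, hu0⟩ := eq_zero_and_eq_zero_of_nonneg_neg_mul_add_neg_mul
    (by linarith : -2 * β + |α| + K < 0) (by linarith : |α| - K < 0) hz hu (by linarith)
  simpa using And.intro hξ0 hu0

/-- Dissipativity estimate: with `ξ = u(0) = z(0)`, the quantity
`Re⟨AZ,Z⟩ = Re(α ξ ū(1)) - (K/2)|u(1)|² + (K/2)|u(0)|² - β|ξ|²` satisfies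
`Re⟨AZ,Z⟩ ≤ (1/2)[(-2β+|α|+K)|z(0)|² + (|α|-K)|u(1)|²] ≤ 0`; hence, under the
strict inequalities `|α| < K < 2β - |α|`, `Re⟨AZ,Z⟩ = 0` forces
`z(0) = 0` and `u(1) = 0`. -/
theorem stmt12 (α β K : ℝ) (hβ : 0 < β) (hαβ : |α| < β)
    (hK1 : |α| ≤ K) (hK2 : K ≤ 2 * β - |α|)
    (z0 u1 : ℂ) (ξ : ℂ) (hξ : ξ = z0) (R : ℝ)
    (hR : R = ((α : ℂ) * ξ * (starRingEnd ℂ) u1).re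
        - K / 2 * ‖u1‖ ^ 2 + K / 2 * ‖ξ‖ ^ 2 - β * ‖ξ‖ ^ 2) :
    R ≤ 1 / 2 * ((-2 * β + |α| + K) * ‖z0‖ ^ 2 + (|α| - K) * ‖u1‖ ^ 2) ∧
      1 / 2 * ((-2 * β + |α| + K) * ‖z0‖ ^ 2 + (|α| - K) * ‖u1‖ ^ 2) ≤ 0 ∧
      (|α| < K → K < 2 * β - |α| → R = 0 → z0 = 0 ∧ u1 = 0) :=
  stmt12_general α β K hK1 hK2 z0 u1 ξ hξ R hR
end

section
/- Let y: [0,1] × [0,∞) → ℝ be a smooth solution of y_tt = (a y_x)_x on (0,1) with boundary dynamics m y_tt(0,t) = (a y_x)(0,t) - β y_t(0,t) + α y_t(0,t-τ) and M y_tt(1,t) = -(a y_x)(1,t). Then the quantity ρ(t) = ∫₀¹ y_t(x,t) dx + m y_t(0,t) + M y_t(1,t) + ατ ∫₀¹ y_t(0, t - xτ) dx + (β - α) y(0,t) is constant in time. -/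
/-!
Rewriting the delay term by the substitution `u = t - xτ` as `α ∫_{t-τ}^t y_t(0,u) du`, `ρ` is
differentiable with `ρ' = ∫₀¹ y_tt dx + m y_tt(0,·) + M y_tt(1,·) + α (y_t(0,t) - y_t(0,t-τ))
+ (β - α) y_t(0,·)`. For `t > 0` the wave equation turns the first term into the flux
`(a y_x)(1,t) - (a y_x)(0,t)`, which the two boundary equations cancel, so `ρ' = 0` on `(0,∞)`
and the mean value theorem gives `ρ(t) = ρ(0)`.
-/

open MeasureTheory Set intervalIntegral

theorem hasDerivAt_intervalIntegral_of_continuous {f f' : ℝ → ℝ → ℝ} {a b : ℝ}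
    (hf : Continuous (Function.uncurry f)) (hf' : Continuous (Function.uncurry f'))
    (hderiv : ∀ x ∈ uIcc a b, ∀ t, HasDerivAt (f x ·) (f' x t) t) (t₀ : ℝ) :
    HasDerivAt (fun t => ∫ x in a..b, f x t) (∫ x in a..b, f' x t₀) t₀ := by
  obtain ⟨C, hC⟩ := (isCompact_uIcc.prod (isCompact_Icc (a := t₀ - 1) (b := t₀ + 1))
    ).exists_bound_of_continuousOn hf'.continuousOn
  have hslice : ∀ t, Continuous (f · t) := fun t => hf.comp₂ continuous_id continuous_const
  exact (hasDerivAt_integral_of_dominated_loc_of_deriv_le (F := fun t x => f x t)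
    (F' := fun t x => f' x t) (bound := fun _ => C) (Ioo_mem_nhds (sub_one_lt t₀) (lt_add_one t₀))
    (Filter.Eventually.of_forall fun t => (hslice t).aestronglyMeasurable)
    ((hslice t₀).intervalIntegrable a b)
    (hf'.comp₂ continuous_id continuous_const).aestronglyMeasurable
    (ae_of_all _ fun x hx t ht => hC (x, t) ⟨uIoc_subset_uIcc hx, Ioo_subset_Icc_self ht⟩)
    intervalIntegrable_const
    (ae_of_all _ fun x hx t _ => hderiv x (uIoc_subset_uIcc hx) t)).2

theorem mul_integral_comp_sub_mul_right (f : ℝ → ℝ) (τ r : ℝ) :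
    τ * ∫ x in (0:ℝ)..1, f (r - x * τ) = ∫ u in r - τ..r, f u := by
  simp_rw [mul_comm _ τ, intervalIntegral.mul_integral_comp_sub_mul, mul_one, mul_zero, sub_zero]

theorem hasDerivAt_integral_sub_delay {f : ℝ → ℝ} (hf : Continuous f) (τ t : ℝ) :
    HasDerivAt (fun s => ∫ u in s - τ..s, f u) (f t - f (t - τ)) t := by
  have hright := (hf.integral_hasStrictDerivAt 0 t).hasDerivAt
  have hleft := (hf.integral_hasStrictDerivAt 0 (t - τ)).hasDerivAt.comp_sub_const t τ
  refine (hright.sub hleft).congr_of_eventuallyEq (Filter.Eventually.of_forall fun s => ?_)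
  exact (integral_interval_sub_left (hf.intervalIntegrable 0 s)
    (hf.intervalIntegrable 0 (s - τ))).symm

theorem integral_eq_sub_of_eqOn_Ioo {g w F : ℝ → ℝ} {a b : ℝ} (hab : a ≤ b)
    (hg : ContinuousOn g (Icc a b)) (hF : ∀ x ∈ Icc a b, HasDerivAt F (w x) x)
    (hgw : EqOn g w (Ioo a b)) : ∫ x in a..b, g x = F b - F a :=
  integral_eq_sub_of_hasDerivAt_of_le hab (fun x hx => (hF x hx).continuousAt.continuousWithinAt)
    (fun x hx => hgw hx ▸ hF x (Ioo_subset_Icc_self hx)) (hg.intervalIntegrable_of_Icc hab)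

theorem eq_of_hasDerivAt_of_forall_gt {f f' : ℝ → ℝ} {a t : ℝ}
    (hf : ∀ s, HasDerivAt f (f' s) s) (hf' : ∀ s > a, f' s = 0) (hat : a ≤ t) :
    f t = f a := by
  rcases hat.eq_or_lt with rfl | hat
  · rfl
  obtain ⟨c, hc, hslope⟩ := exists_hasDerivAt_eq_slope f f' hat
    (fun s _ => (hf s).continuousAt.continuousWithinAt) (fun s _ => hf s)
  rw [hf' c hc.1, eq_comm, div_eq_zero_iff, sub_eq_zero] at hslope
  exact hslope.resolve_right (sub_ne_zero.2 hat.ne')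

theorem stmt13_general (a : ℝ → ℝ) (m M τ α β : ℝ)
    (y yt ytt yx w : ℝ → ℝ → ℝ)
    (hyt : ∀ x ∈ Icc (0:ℝ) 1, ∀ t : ℝ, HasDerivAt (fun s => y x s) (yt x t) t)
    (hytt : ∀ x ∈ Icc (0:ℝ) 1, ∀ t : ℝ, HasDerivAt (fun s => yt x s) (ytt x t) t)
    (hw : ∀ t : ℝ, ∀ x ∈ Icc (0:ℝ) 1,
      HasDerivAt (fun s => a s * yx s t) (w x t) x)
    (hytCont : Continuous fun p : ℝ × ℝ => yt p.1 p.2)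
    (hyttCont : Continuous fun p : ℝ × ℝ => ytt p.1 p.2)
    (hwave : ∀ t > (0:ℝ), ∀ x ∈ Ioo (0:ℝ) 1, ytt x t = w x t)
    (hbc0 : ∀ t > (0:ℝ),
      m * ytt 0 t = a 0 * yx 0 t - β * yt 0 t + α * yt 0 (t - τ))
    (hbc1 : ∀ t > (0:ℝ), M * ytt 1 t = -(a 1 * yx 1 t)) :
    ∀ t ≥ (0:ℝ),
      (∫ x in (0:ℝ)..1, yt x t) + m * yt 0 t + M * yt 1 t
          + α * τ * (∫ x in (0:ℝ)..1, yt 0 (t - x * τ)) + (β - α) * y 0 t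
        = (∫ x in (0:ℝ)..1, yt x 0) + m * yt 0 0 + M * yt 1 0
          + α * τ * (∫ x in (0:ℝ)..1, yt 0 (-(x * τ))) + (β - α) * y 0 0 := by
  intro t ht
  have h0 : (0:ℝ) ∈ Icc (0:ℝ) 1 := left_mem_Icc.2 zero_le_one
  have h1 : (1:ℝ) ∈ Icc (0:ℝ) 1 := right_mem_Icc.2 zero_le_one
  have hρ : ∀ s, HasDerivAt (fun s => (∫ x in (0:ℝ)..1, yt x s) + m * yt 0 s + M * yt 1 s
        + α * (∫ u in s - τ..s, yt 0 u) + (β - α) * y 0 s)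
      ((∫ x in (0:ℝ)..1, ytt x s) + m * ytt 0 s + M * ytt 1 s
        + α * (yt 0 s - yt 0 (s - τ)) + (β - α) * yt 0 s) s := fun s =>
    ((((hasDerivAt_intervalIntegral_of_continuous hytCont hyttCont
      (fun x hx => hytt x (by rwa [uIcc_of_le zero_le_one] at hx)) s).add
      ((hytt 0 h0 s).const_mul m)).add ((hytt 1 h1 s).const_mul M)).add
      ((hasDerivAt_integral_sub_delay (hytCont.comp₂ continuous_const continuous_id) τ s).const_mul
        α)).add ((hyt 0 h0 s).const_mul (β - α))
  have hρ' : ∀ s > 0, (∫ x in (0:ℝ)..1, ytt x s) + m * ytt 0 s + M * ytt 1 s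
      + α * (yt 0 s - yt 0 (s - τ)) + (β - α) * yt 0 s = 0 := by
    intro s hs
    have hflux : ∫ x in (0:ℝ)..1, ytt x s = a 1 * yx 1 s - a 0 * yx 0 s :=
      integral_eq_sub_of_eqOn_Ioo zero_le_one
        (hyttCont.comp₂ continuous_id continuous_const).continuousOn (fun x hx => hw s x hx)
        (fun x hx => hwave s hs x hx)
    rw [hflux, hbc0 s hs, hbc1 s hs]
    ring
  have hdelay (r : ℝ) :
      α * τ * ∫ x in (0:ℝ)..1, yt 0 (r - x * τ) = α * ∫ u in r - τ..r, yt 0 u := by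
    rw [mul_assoc, mul_integral_comp_sub_mul_right]
  have hdelay0 := hdelay 0
  simp only [zero_sub] at hdelay0
  rw [hdelay t, hdelay0]
  simpa using eq_of_hasDerivAt_of_forall_gt hρ hρ' ht

/-- Conservation of `ρ(t) = ∫₀¹ y_t dx + m y_t(0,t) + M y_t(1,t)
+ ατ ∫₀¹ y_t(0,t-xτ) dx + (β-α) y(0,t)` for smooth solutions of the
overhead crane system with delayed boundary control. -/
theorem stmt13 (a : ℝ → ℝ) (a₀ m M τ α β : ℝ)
    (ha₀ : 0 < a₀) (haLB : ∀ x ∈ Icc (0:ℝ) 1, a₀ ≤ a x)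
    (hm : 0 < m) (hM : 0 < M) (hτ : 0 < τ) (hβ : 0 < β)
    (y yt ytt yx w : ℝ → ℝ → ℝ)
    (hyt : ∀ x ∈ Icc (0:ℝ) 1, ∀ t : ℝ, HasDerivAt (fun s => y x s) (yt x t) t)
    (hytt : ∀ x ∈ Icc (0:ℝ) 1, ∀ t : ℝ, HasDerivAt (fun s => yt x s) (ytt x t) t)
    (hyx : ∀ t : ℝ, ∀ x ∈ Icc (0:ℝ) 1, HasDerivAt (fun s => y s t) (yx x t) x)
    (hw : ∀ t : ℝ, ∀ x ∈ Icc (0:ℝ) 1,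
      HasDerivAt (fun s => a s * yx s t) (w x t) x)
    (hytCont : Continuous fun p : ℝ × ℝ => yt p.1 p.2)
    (hyttCont : Continuous fun p : ℝ × ℝ => ytt p.1 p.2)
    (hwave : ∀ t > (0:ℝ), ∀ x ∈ Ioo (0:ℝ) 1, ytt x t = w x t)
    (hbc0 : ∀ t > (0:ℝ),
      m * ytt 0 t = a 0 * yx 0 t - β * yt 0 t + α * yt 0 (t - τ))
    (hbc1 : ∀ t > (0:ℝ), M * ytt 1 t = -(a 1 * yx 1 t)) :
    ∀ t ≥ (0:ℝ),
      (∫ x in (0:ℝ)..1, yt x t) + m * yt 0 t + M * yt 1 t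
          + α * τ * (∫ x in (0:ℝ)..1, yt 0 (t - x * τ)) + (β - α) * y 0 t
        = (∫ x in (0:ℝ)..1, yt x 0) + m * yt 0 0 + M * yt 1 0
          + α * τ * (∫ x in (0:ℝ)..1, yt 0 (-(x * τ))) + (β - α) * y 0 0 :=
  stmt13_general a m M τ α β y yt ytt yx w hyt hytt hw hytCont hyttCont hwave hbc0 hbc1
end
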